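/- arXiv:1003.0588 — 2 statements merged into one kernel-verified Lean document; each statement's English description precedes it below -/
import Mathlib

section
/- Let L ⊆ A^* be context-free and h : A^* → {a}^* the morphism sending every letter to the single letter a (so h(w) = a^{|w|}). Then h(L) = { a^{|w|} : w ∈ L } is a regular language. -/
/-!
The length set of a context-free language is eventually periodic, so the left quotients of its
unary image are finitely many and Myhill–Nerode applies. Periodicity comes from pumping on parse
trees of minimal height: on a path of height-minimal subtrees longer than the number of
nonterminals some nonterminal `B` repeats, and minimality forces the repeat to add a positive
length `k`, so `B` pumps by every multiple of `k`. With `P` a common multiple of these periods,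
every long enough length `n` yields `n + P`, and a set of naturals with that property is
eventually periodic.
-/

theorem Function.finite_range_of_eventually_periodic {β : Type*} {f : ℕ → β} {N P : ℕ}
    (hP : 0 < P) (hf : ∀ n, N ≤ n → f (n + P) = f n) : (Set.range f).Finite := by
  refine ((Set.finite_Iio (N + P)).image f).subset ?_
  rintro _ ⟨n, rfl⟩
  induction n using Nat.strong_induction_on with
  | _ n ih =>
    by_cases hn : n < N + P
    · exact ⟨n, hn, rfl⟩
    · obtain ⟨m, rfl⟩ : ∃ m, n = m + P := ⟨n - P, by omega⟩
      rw [hf m (by omega)]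
      exact ih m (by omega)

theorem Set.add_mul_mem_of_add_mem {S : Set ℕ} {p P : ℕ}
    (hS : ∀ n ∈ S, p ≤ n → n + P ∈ S) {n : ℕ} (hn : n ∈ S) (hpn : p ≤ n) (c : ℕ) :
    n + c * P ∈ S := by
  induction c with
  | zero => simpa using hn
  | succ c ih => simpa [add_mul, ← add_assoc] using hS _ ih (by omega)

theorem Set.exists_add_mem_iff_of_add_mem {S : Set ℕ} {p P : ℕ} (hP : 0 < P)
    (hS : ∀ n ∈ S, p ≤ n → n + P ∈ S) : ∃ N, ∀ n, N ≤ n → (n + P ∈ S ↔ n ∈ S) := by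
  -- each residue class mod `P` contains at most one point where `S` switches on
  set D := {n | p ≤ n ∧ n ∉ S ∧ n + P ∈ S}
  have hsep : ∀ m ∈ D, ∀ n ∈ D, m % P = n % P → ¬ m < n := by
    rintro m ⟨hpm, -, hmP⟩ n ⟨-, hn, -⟩ hmn hlt
    obtain ⟨c, hc⟩ := (Nat.modEq_iff_dvd' hlt.le).mp hmn
    obtain ⟨c, rfl⟩ := Nat.exists_eq_add_one_of_ne_zero (by rintro rfl; omega : c ≠ 0)
    have hn' : n = m + P + c * P := by rw [mul_add_one, mul_comm] at hc; omega
    exact hn (hn' ▸ Set.add_mul_mem_of_add_mem hS hmP (by omega) c)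
  have hD : D.Finite := by
    refine Set.Finite.of_injOn (f := (· % P)) (t := Set.Iio P)
      (fun n _ => Nat.mod_lt n hP) (fun m hm n hn hmn => ?_) (Set.finite_Iio P)
    rcases lt_trichotomy m n with h | h | h
    exacts [(hsep m hm n hn hmn h).elim, h, (hsep n hn m hm hmn.symm h).elim]
  obtain ⟨N, hN⟩ := hD.bddAbove
  refine ⟨max p (N + 1), fun n hn => ⟨fun hnP => ?_, fun hnS => hS n hnS (by omega)⟩⟩
  by_contra hnS
  exact absurd (hN ⟨by omega, hnS, hnP⟩) (by omega)

theorem Language.isRegular_setOf_length_mem {α : Type*} {S : Set ℕ} {N P : ℕ} (hP : 0 < P)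
    (hS : ∀ n, N ≤ n → (n + P ∈ S ↔ n ∈ S)) : Language.IsRegular {x : List α | x.length ∈ S} := by
  set f : ℕ → Language α := fun n => {y | n + y.length ∈ S}
  have hf : ∀ n, N ≤ n → f (n + P) = f n := fun n hn => by
    ext y
    change n + P + y.length ∈ S ↔ n + y.length ∈ S
    rw [add_right_comm, hS _ (by omega)]
  refine .of_finite_range_leftQuotient
    ((Function.finite_range_of_eventually_periodic hP hf).subset ?_)
  rintro _ ⟨x, rfl⟩
  refine ⟨x.length, ?_⟩
  ext y
  change _ ↔ (x ++ y).length ∈ S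
  rw [List.length_append]
  rfl

theorem List.Forall₂.or_exists_split {α β : Type*} {R S : α → β → Prop} {l₁ : List α}
    {l₂ : List β} (h : Forall₂ R l₁ l₂) :
    Forall₂ S l₁ l₂ ∨ ∃ a x b u y v, l₁ = a ++ x :: b ∧ l₂ = u ++ y :: v ∧
      Forall₂ R a u ∧ R x y ∧ ¬ S x y ∧ Forall₂ R b v := by
  induction h with
  | nil => exact .inl .nil
  | @cons x y l₁ l₂ hxy hl ih =>
    by_cases hS : S x y
    · rcases ih with ih | ⟨a, x', b, u, y', v, rfl, rfl, ha, hxy', hS', hb⟩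
      · exact .inl (.cons hS ih)
      · exact .inr ⟨x :: a, x', b, y :: u, y', v, rfl, rfl, .cons hxy ha, hxy', hS', hb⟩
    · exact .inr ⟨[], x, l₁, [], y, l₂, rfl, rfl, .nil, hxy, hS, hl⟩

theorem List.Forall₂.exists_append_left {α β : Type*} {R : α → β → Prop} {a b : List α}
    {l : List β} (h : Forall₂ R (a ++ b) l) :
    ∃ u v, l = u ++ v ∧ Forall₂ R a u ∧ Forall₂ R b v := by
  induction a generalizing l with
  | nil => exact ⟨[], l, rfl, .nil, h⟩
  | cons x a ih =>
    obtain ⟨y, l', hxy, h', rfl⟩ := forall₂_cons_left_iff.mp h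
    obtain ⟨u, v, rfl, hu, hv⟩ := ih h'
    exact ⟨y :: u, v, rfl, .cons hxy hu, hv⟩

theorem List.Forall₂.sum_le_length_mul {α : Type*} {l₁ : List α} {l₂ : List ℕ} {K : ℕ}
    (h : Forall₂ (fun _ n => n ≤ K) l₁ l₂) : l₂.sum ≤ l₁.length * K := by
  induction h with
  | nil => simp
  | cons hxy _ ih => simp only [sum_cons, length_cons, add_mul, one_mul]; omega

namespace ContextFreeGrammar

variable {T : Type*}

/-- `g.YieldsLength h s n`: the symbol `s` derives a terminal word of length `n` by a parse tree
of height at most `h`. -/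
def YieldsLength (g : ContextFreeGrammar T) : ℕ → Symbol T g.NT → ℕ → Prop
  | _, .terminal _, n => n = 1
  | 0, .nonterminal _, _ => False
  | h + 1, .nonterminal A, n => ∃ r ∈ g.rules, r.input = A ∧
      ∃ ns : List ℕ, List.Forall₂ (g.YieldsLength h) r.output ns ∧ ns.sum = n

variable {g : ContextFreeGrammar T}

@[simp]
theorem yieldsLength_terminal {h n : ℕ} {t : T} : g.YieldsLength h (.terminal t) n ↔ n = 1 := by
  cases h <;> rfl

theorem YieldsLength.mono {h h' : ℕ} {s : Symbol T g.NT} {n : ℕ} (hs : g.YieldsLength h s n)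
    (hh : h ≤ h') : g.YieldsLength h' s n := by
  induction h generalizing h' s n with
  | zero =>
    cases s with
    | terminal t => simpa using hs
    | nonterminal A => exact hs.elim
  | succ h ih =>
    cases s with
    | terminal t => simpa using hs
    | nonterminal A =>
      obtain ⟨h', rfl⟩ : ∃ h'', h' = h'' + 1 := ⟨h' - 1, by omega⟩
      obtain ⟨r, hr, hA, ns, hns, rfl⟩ := hs
      exact ⟨r, hr, hA, ns, hns.imp fun _ _ hsn => ih hsn (by omega), rfl⟩

theorem exists_derives_of_forall₂ {α : List (Symbol T g.NT)} {ns : List ℕ}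
    (h : List.Forall₂ (fun s n => ∃ w : List T, g.Derives [s] (w.map .terminal) ∧ w.length = n)
      α ns) :
    ∃ w : List T, g.Derives α (w.map .terminal) ∧ w.length = ns.sum := by
  induction h with
  | nil => exact ⟨[], .refl _, rfl⟩
  | @cons s n α ns hsn _ ih =>
    obtain ⟨w₁, hw₁, rfl⟩ := hsn
    obtain ⟨w₂, hw₂, hlen₂⟩ := ih
    refine ⟨w₁ ++ w₂, ?_, by simp [hlen₂]⟩
    rw [List.map_append]
    exact (hw₁.append_right α).trans (hw₂.append_left _)

theorem exists_derives_of_yieldsLength {h : ℕ} {s : Symbol T g.NT} {n : ℕ}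
    (hs : g.YieldsLength h s n) : ∃ w : List T, g.Derives [s] (w.map .terminal) ∧ w.length = n := by
  induction h generalizing s n with
  | zero =>
    cases s with
    | terminal t => exact ⟨[t], .refl _, by simpa using hs.symm⟩
    | nonterminal A => exact hs.elim
  | succ h ih =>
    cases s with
    | terminal t => exact ⟨[t], .refl _, by simpa using hs.symm⟩
    | nonterminal A =>
      obtain ⟨r, hr, rfl, ns, hns, rfl⟩ := hs
      obtain ⟨w, hw, hlen⟩ := exists_derives_of_forall₂ (hns.imp fun _ _ hsn => ih hsn)
      exact ⟨w, Produces.trans_derives ⟨r, hr, .input_output⟩ hw, hlen⟩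

theorem exists_yieldsLength_of_derives {α : List (Symbol T g.NT)} {w : List T}
    (hα : g.Derives α (w.map .terminal)) :
    ∃ h ns, List.Forall₂ (g.YieldsLength h) α ns ∧ ns.sum = w.length := by
  induction hα using Relation.ReflTransGen.head_induction_on with
  | refl =>
    refine ⟨0, w.map fun _ => 1, ?_, by simp⟩
    rw [List.forall₂_map_left_iff, List.forall₂_map_right_iff]
    exact List.forall₂_same.mpr fun _ _ => yieldsLength_terminal.mpr rfl
  | head hp _ ih =>
    obtain ⟨h, ns, hns, hsum⟩ := ih
    obtain ⟨r, hr, hrw⟩ := hp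
    obtain ⟨p, q, rfl, rfl⟩ := hrw.exists_parts
    obtain ⟨u', v, rfl, hu', hv⟩ := hns.exists_append_left
    obtain ⟨u, m, rfl, hu, hm⟩ := hu'.exists_append_left
    refine ⟨h + 1, u ++ [m.sum] ++ v, ?_, by simpa using hsum⟩
    refine List.rel_append (List.rel_append (hu.imp fun _ _ hs => hs.mono h.le_succ) ?_)
      (hv.imp fun _ _ hs => hs.mono h.le_succ)
    exact .cons ⟨r, hr, rfl, m, hm, rfl⟩ .nil

variable (g) in
def lengths (A : g.NT) : Set ℕ :=
  {n | ∃ h, g.YieldsLength h (.nonterminal A) n}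

theorem mem_lengths_initial_iff {n : ℕ} :
    n ∈ g.lengths g.initial ↔ ∃ w ∈ g.language, w.length = n := by
  constructor
  · rintro ⟨h, hn⟩
    obtain ⟨w, hw, rfl⟩ := exists_derives_of_yieldsLength hn
    exact ⟨w, (mem_language_iff g w).mpr hw, rfl⟩
  · rintro ⟨w, hw, rfl⟩
    obtain ⟨h, ns, hns, hsum⟩ := exists_yieldsLength_of_derives ((mem_language_iff g w).mp hw)
    obtain ⟨n, _, hn, hnil, rfl⟩ := List.forall₂_cons_left_iff.mp hns
    obtain rfl := List.forall₂_nil_left_iff.mp hnil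
    exact ⟨h, by simpa [← hsum] using hn⟩

variable (g) in
/-- A length-level stand-in for `A ⇒* u B v` with `|u v| = d`. -/
def Embeds (A B : g.NT) (d : ℕ) : Prop :=
  ∀ n ∈ g.lengths B, n + d ∈ g.lengths A

theorem Embeds.trans {A B C : g.NT} {d e : ℕ} (hAB : g.Embeds A B d) (hBC : g.Embeds B C e) :
    g.Embeds A C (e + d) := fun n hn => by
  simpa [add_assoc] using hAB _ (hBC n hn)

theorem Embeds.self_mul {B : g.NT} {k : ℕ} (hB : g.Embeds B B k) (c : ℕ) :
    g.Embeds B B (c * k) := by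
  induction c with
  | zero => intro n hn; simpa using hn
  | succ c ih => simpa [add_mul, add_comm] using hB.trans ih

variable (g) in
def IsSelfEmbedding (B : g.NT) : Prop :=
  ∃ k, 0 < k ∧ g.Embeds B B k

theorem exists_common_selfEmbedding_period (s : Finset g.NT) :
    ∃ P, 0 < P ∧ ∀ B ∈ s, g.IsSelfEmbedding B → g.Embeds B B P := by
  classical
  induction s using Finset.induction_on with
  | empty => exact ⟨1, one_pos, by simp⟩
  | insert B s _ ih =>
    obtain ⟨P, hP, hs⟩ := ih
    by_cases hB : g.IsSelfEmbedding B
    · obtain ⟨k, hk, hBk⟩ := hB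
      refine ⟨k * P, Nat.mul_pos hk hP, ?_⟩
      intro C hC hCself
      rcases Finset.mem_insert.mp hC with rfl | hC
      · rw [mul_comm]
        exact hBk.self_mul P
      · exact (hs C hC hCself).self_mul k
    · refine ⟨P, hP, fun C hC hCself => ?_⟩
      rcases Finset.mem_insert.mp hC with rfl | hC
      exacts [(hB hCself).elim, hs C hC hCself]

theorem exists_yieldsLength_le_pow :
    ∃ M, 0 < M ∧ ∀ h s n, g.YieldsLength h s n → n ≤ M ^ h := by
  refine ⟨(g.rules.sup fun r => r.output.length) + 1, Nat.succ_pos _, fun h => ?_⟩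
  induction h with
  | zero =>
    rintro (t | A) n hs
    exacts [by simp_all, hs.elim]
  | succ h ih =>
    rintro (t | A) n hs
    · simp_all [Nat.one_le_pow]
    obtain ⟨r, hr, rfl, ns, hns, rfl⟩ := hs
    have hlen : r.output.length ≤ (g.rules.sup fun r => r.output.length) + 1 :=
      (Finset.le_sup (f := fun r => r.output.length) hr).trans (Nat.le_succ _)
    rw [pow_succ, mul_comm]
    exact ((hns.imp fun _ _ hsn => ih _ _ hsn).sum_le_length_mul).trans
      (Nat.mul_le_mul_right _ hlen)

theorem embeds_of_mem_rules {r : ContextFreeRule T g.NT} (hr : r ∈ g.rules)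
    {a b : List (Symbol T g.NT)} {B : g.NT} (hout : r.output = a ++ .nonterminal B :: b)
    {h : ℕ} {u v : List ℕ} (hu : List.Forall₂ (g.YieldsLength h) a u)
    (hv : List.Forall₂ (g.YieldsLength h) b v) : g.Embeds r.input B (u.sum + v.sum) := by
  rintro m ⟨h', hm⟩
  refine ⟨max h h' + 1, r, hr, rfl, u ++ m :: v, ?_, by simp; ring⟩
  rw [hout]
  exact List.rel_append (hu.imp fun _ _ hs => hs.mono (le_max_left _ _))
    (.cons (hm.mono (le_max_right _ _)) (hv.imp fun _ _ hs => hs.mono (le_max_left _ _)))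

theorem exists_child_of_minimal_height {A : g.NT} {n h : ℕ}
    (hA : g.YieldsLength (h + 2) (.nonterminal A) n)
    (hmin : ¬ g.YieldsLength (h + 1) (.nonterminal A) n) :
    ∃ B m d, g.YieldsLength (h + 1) (.nonterminal B) m ∧ ¬ g.YieldsLength h (.nonterminal B) m ∧
      g.Embeds A B d ∧ n = m + d := by
  obtain ⟨r, hr, rfl, ns, hns, rfl⟩ := hA
  rcases hns.or_exists_split (S := g.YieldsLength h) with hlow | hsplit
  · exact (hmin ⟨r, hr, rfl, ns, hlow, rfl⟩).elim
  obtain ⟨a, (t | B), b, u, m, v, hout, rfl, hu, hm, hm', hv⟩ := hsplit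
  · exact (hm' (by simpa using hm)).elim
  refine ⟨B, m, u.sum + v.sum, hm, hm', embeds_of_mem_rules hr hout hu hv, ?_⟩
  simp only [List.sum_append, List.sum_cons]
  ring

variable (g) in
def inputs [DecidableEq g.NT] : Finset g.NT :=
  g.rules.image ContextFreeRule.input

theorem mem_inputs_of_yieldsLength [DecidableEq g.NT] {A : g.NT} {h n : ℕ}
    (hA : g.YieldsLength (h + 1) (.nonterminal A) n) : A ∈ g.inputs := by
  obtain ⟨r, hr, rfl, -⟩ := hA
  exact Finset.mem_image_of_mem _ hr

/-- `F` collects the nonterminals met so far on a path of height-minimal subtrees: each `C ∈ F`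
embeds `A` with a shift `d` such that `n + d` needs height above `h + 1` from `C`. Meeting such a
`C` again therefore embeds it into itself with a positive shift, and since the path is longer
than the number of nonterminals, this must happen. -/
theorem exists_isSelfEmbedding_of_card_le [DecidableEq g.NT] (h : ℕ) {F : Finset g.NT}
    {A : g.NT} {n : ℕ} (hF : F ⊆ g.inputs) (hAF : A ∉ F) (hcard : g.inputs.card ≤ F.card + h)
    (hA : g.YieldsLength (h + 1) (.nonterminal A) n) (hmin : ¬ g.YieldsLength h (.nonterminal A) n)
    (hFA : ∀ C ∈ F, ∃ d, g.Embeds C A d ∧ ¬ g.YieldsLength (h + 1) (.nonterminal C) (n + d)) :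
    ∃ B ∈ g.inputs, g.IsSelfEmbedding B ∧ ∀ P, g.Embeds B B P → n + P ∈ g.lengths A := by
  induction h generalizing F A n with
  | zero =>
    have := Finset.card_le_card (Finset.insert_subset (mem_inputs_of_yieldsLength hA) hF)
    rw [Finset.card_insert_of_notMem hAF] at this
    omega
  | succ h ih =>
    have hAF' : insert A F ⊆ g.inputs := Finset.insert_subset (mem_inputs_of_yieldsLength hA) hF
    obtain ⟨B, m, d, hB, hBmin, hAB, rfl⟩ := exists_child_of_minimal_height hA hmin
    have hFB : ∀ C ∈ insert A F, ∃ e, g.Embeds C B e ∧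
        ¬ g.YieldsLength (h + 1) (.nonterminal C) (m + e) := by
      intro C hC
      rcases Finset.mem_insert.mp hC with rfl | hC
      · exact ⟨d, hAB, hmin⟩
      · obtain ⟨e, hCA, he⟩ := hFA C hC
        exact ⟨d + e, hCA.trans hAB, fun hC' => he ((add_assoc m d e ▸ hC').mono (by omega))⟩
    obtain ⟨B', hB', hself, hpump⟩ : ∃ B' ∈ g.inputs, g.IsSelfEmbedding B' ∧
        ∀ P, g.Embeds B' B' P → m + P ∈ g.lengths B := by
      by_cases hBF : B ∈ insert A F
      · obtain ⟨e, hBB, he⟩ := hFB B hBF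
        have he0 : 0 < e := Nat.pos_of_ne_zero fun h0 => he (by simpa [h0] using hB)
        exact ⟨B, hAF' hBF, ⟨e, he0, hBB⟩, fun P hP => hP m ⟨h + 1, hB⟩⟩
      · exact ih hAF' hBF (by rw [Finset.card_insert_of_notMem hAF]; omega) hB hBmin hFB
    refine ⟨B', hB', hself, fun P hP => ?_⟩
    simpa [add_right_comm] using hAB _ (hpump P hP)

theorem exists_minimal_height_of_mem_lengths {A : g.NT} {n : ℕ} (hn : n ∈ g.lengths A) :
    ∃ h, g.YieldsLength (h + 1) (.nonterminal A) n ∧ ¬ g.YieldsLength h (.nonterminal A) n := by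
  classical
  have hspec := Nat.find_spec hn
  rcases hfind : Nat.find hn with _ | h
  · exact (hfind ▸ hspec).elim
  · exact ⟨h, hfind ▸ hspec, Nat.find_min hn (by omega)⟩

variable (g) in
theorem exists_add_mem_lengths_initial :
    ∃ p P, 0 < P ∧ ∀ n ∈ g.lengths g.initial, p ≤ n → n + P ∈ g.lengths g.initial := by
  classical
  obtain ⟨M, hM, hle⟩ := exists_yieldsLength_le_pow (g := g)
  obtain ⟨P, hP, hperiod⟩ := exists_common_selfEmbedding_period (g := g) g.inputs
  refine ⟨M ^ g.inputs.card + 1, P, hP, fun n hn hpn => ?_⟩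
  obtain ⟨h, hh, hmin⟩ := exists_minimal_height_of_mem_lengths hn
  have hcard : g.inputs.card ≤ h := by
    by_contra! hlt
    have := (hle _ _ _ hh).trans (Nat.pow_le_pow_right hM hlt)
    omega
  obtain ⟨B, hB, hself, hpump⟩ := exists_isSelfEmbedding_of_card_le h (Finset.empty_subset _)
    (Finset.notMem_empty _) (by simpa using hcard) hh hmin (by simp)
  exact hpump P (hperiod B hB hself)

end ContextFreeGrammar

/-- If L is context-free and h is the morphism sending every letter to a single
letter (so h(w) = a^{|w|}), then h(L) is regular. Here the unary alphabet is
modeled by the type Unit. -/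
theorem lengthImage_of_contextFree_isRegular {A : Type*} (L : Language A)
    (hL : L.IsContextFree) :
    Language.IsRegular
      {x : List Unit | ∃ w ∈ L, x = List.replicate w.length ()} := by
  obtain ⟨g, rfl⟩ := hL
  obtain ⟨p, P, hP, hpump⟩ := g.exists_add_mem_lengths_initial
  obtain ⟨N, hN⟩ := Set.exists_add_mem_iff_of_add_mem hP hpump
  have hlen : {x : List Unit | ∃ w ∈ g.language, x = List.replicate w.length ()} =
      {x | x.length ∈ g.lengths g.initial} := by
    ext x
    simp [ContextFreeGrammar.mem_lengths_initial_iff, List.eq_replicate_iff, eq_comm]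
  rw [hlen]
  exact Language.isRegular_setOf_length_mem hP hN
end

section
/- Let T be a Turing machine with moving-head system T_H on the compact space X_H. If there exists N ∈ ℕ such that T makes no cycle of width greater than N (the head never returns to a cell i after having visited i+N or i−N, starting from i), then every configuration of X_H containing the head is an equicontinuity point of T_H. Quantitatively: if x ∈ X_H has its head within [-k,k], then any y agreeing with x on [-k-N, k+N] satisfies T_H^t(y) ∈ [T_H^t(x) restricted to [-k,k]] for all t ≥ 0. -/
/-- A Turing machine with tape alphabet `A`, state set `Q`, and rule
`δ : A × Q → A × Q × {-1,1}` (the direction is encoded by a `Bool`). -/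
structure TuringMachine (A Q : Type*) where
  δ : A → Q → A × Q × Bool

namespace TuringMachine

variable {A Q : Type*}

/-- Direction of a move: `true ↦ +1`, `false ↦ -1`. -/
def dir (b : Bool) : ℤ := if b then 1 else -1

/-- A configuration: tape contents, head state, head position. -/
abbrev Config (A Q : Type*) := (ℤ → A) × Q × ℤ

/-- One step of the machine on `X = A^ℤ × Q × ℤ`. -/
def step (M : TuringMachine A Q) (c : Config A Q) : Config A Q :=
  let r := M.δ (c.1 c.2.2) c.2.1
  (Function.update c.1 c.2.2 r.1, r.2.1, c.2.2 + dir r.2.2)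

/-- Head position after `t` steps. -/
def pos (M : TuringMachine A Q) (t : ℕ) (c : Config A Q) : ℤ :=
  ((M.step)^[t] c).2.2

/-- `c` is preperiodic for the machine. -/
def Preperiodic (M : TuringMachine A Q) (c : Config A Q) : Prop :=
  ∃ m p : ℕ, 0 < p ∧ (M.step)^[m + p] c = (M.step)^[m] c

end TuringMachine

namespace TuringMachine

variable {A Q : Type*}

/-- Alphabet of the moving-head system: a tape letter, or a tape letter marked
with the head together with its state. -/
abbrev Cell (A Q : Type*) := A ⊕ (A × Q)

/-- A cell carries the head. -/
def isHead {A Q : Type*} (b : Cell A Q) : Prop := ∃ p : A × Q, b = Sum.inr p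

/-- Membership in the moving-head phase space X_H: at most one marked cell. -/
def XHmem (x : ℤ → Cell A Q) : Prop :=
  Set.Subsingleton {i : ℤ | isHead (x i)}

/-- One step of the moving-head system T_H on (A ⊔ (A × Q))^ℤ: if there is a
head, apply the rule of the machine at the marked cell (write, change state, and
move the mark by ±1); otherwise do nothing. -/
noncomputable def hstep (M : TuringMachine A Q) (x : ℤ → Cell A Q) :
    ℤ → Cell A Q := by
  classical
  exact if h : ∃ i : ℤ, ∃ b : A, ∃ q : Q, x i = Sum.inr (b, q) then
    let i := h.choose
    let b := h.choose_spec.choose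
    let q := h.choose_spec.choose_spec.choose
    let r := M.δ b q
    let y := Function.update x i (Sum.inl r.1)
    let j := i + dir r.2.2
    Function.update y j
      (match y j with
        | Sum.inl c => Sum.inr (c, r.2.1)
        | Sum.inr (c, _) => Sum.inr (c, r.2.1))
  else x

/-- The column observed at cell 0, defining the subshift S_H. -/
noncomputable def tauH (M : TuringMachine A Q) (x : ℤ → Cell A Q) (t : ℕ) :
    Cell A Q :=
  ((M.hstep)^[t] x) 0

/-- The language of finite factors of the column subshift S_H. -/
noncomputable def langSH (M : TuringMachine A Q) : Language (Cell A Q) :=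
  {w : List (Cell A Q) | ∃ x : ℤ → Cell A Q, XHmem x ∧ ∃ m : ℕ,
    ∀ j : ℕ, ∀ hj : j < w.length, w.get ⟨j, hj⟩ = M.tauH x (m + j)}

end TuringMachine

/-!
A configuration carrying a head is the picture of a machine configuration, and on such pictures
`hstep` is conjugate to `step`. Let the head of `x` lie in `[-k, k]` and let `y` agree with `x`
on `[-k-N, k+N]`. As long as the head stays in `[-k-N, k+N]`, both runs read the same symbols
and stay equal on that window. Once it gets farther than `k+N`, it can never come back to
`[-k, k]`: otherwise a cell `b ∈ [-k, k]`, crossed both on the way out and on the way back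
(discrete intermediate value theorem), would carry a cycle of width `> N`. From then on the
cells of `[-k, k]` are frozen, with the same contents in both runs.
-/

namespace TuringMachine

variable {A Q : Type*}

def NoCycleWiderThan (M : TuringMachine A Q) (N : ℕ) : Prop :=
  ∀ (x : Config A Q) (i : ℤ) (W : ℕ) (t₁ t₂ : ℕ),
    N < W → 0 < t₁ → t₁ < t₂ → x.2.2 = i →
    (M.pos t₁ x = i + W ∨ M.pos t₁ x = i - W) → M.pos t₂ x ≠ i

def toCells (c : Config A Q) : ℤ → Cell A Q :=
  fun j => if j = c.2.2 then Sum.inr (c.1 j, c.2.1) else Sum.inl (c.1 j)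

def tapeOf (x : ℤ → Cell A Q) : ℤ → A :=
  fun j => Sum.elim id Prod.fst (x j)

lemma eq_toCells_of_head {x : ℤ → Cell A Q} (hx : XHmem x) {i : ℤ} {p : A × Q}
    (hxi : x i = Sum.inr p) : x = toCells (tapeOf x, p.2, i) := by
  funext j
  by_cases hji : j = i
  · subst hji
    simp [toCells, tapeOf, hxi]
  · rcases hxj : x j with a | pa
    · simp [toCells, tapeOf, hji, hxj]
    · exact absurd (hx ⟨pa, hxj⟩ ⟨p, hxi⟩) hji

lemma toCells_apply_of_ne {c : Config A Q} {j : ℤ} (hj : j ≠ c.2.2) :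
    toCells c j = Sum.inl (c.1 j) :=
  if_neg hj

lemma abs_dir (b : Bool) : |dir b| = 1 := by
  cases b <;> simp [dir]

lemma hstep_toCells (M : TuringMachine A Q) (c : Config A Q) :
    M.hstep (toCells c) = toCells (M.step c) := by
  have hex : ∃ i : ℤ, ∃ b : A, ∃ q : Q, toCells c i = Sum.inr (b, q) :=
    ⟨c.2.2, c.1 c.2.2, c.2.1, by simp [toCells]⟩
  unfold hstep
  rw [dif_pos hex]
  have hspec := hex.choose_spec.choose_spec.choose_spec
  generalize hex.choose_spec.choose_spec.choose = q at hspec ⊢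
  generalize hex.choose_spec.choose = b at hspec ⊢
  generalize hex.choose = i at hspec ⊢
  obtain rfl : i = c.2.2 := by
    by_contra hne
    simp [toCells, hne] at hspec
  obtain ⟨rfl, rfl⟩ : c.1 c.2.2 = b ∧ c.2.1 = q := by simpa [toCells] using hspec
  have hmove : c.2.2 + dir (M.δ (c.1 c.2.2) c.2.1).2.2 ≠ c.2.2 := by
    have := abs_dir (M.δ (c.1 c.2.2) c.2.1).2.2
    intro h
    simp_all
  funext j
  by_cases h₁ : j = c.2.2 + dir (M.δ (c.1 c.2.2) c.2.1).2.2
  · subst h₁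
    simp [step, toCells, hmove]
  · by_cases h₂ : j = c.2.2
    · subst h₂
      simp [step, toCells, Function.update_apply, Ne.symm hmove]
    · simp [step, toCells, Function.update_apply, h₁, h₂]

lemma hstep_iterate_toCells (M : TuringMachine A Q) (c : Config A Q) (t : ℕ) :
    M.hstep^[t] (toCells c) = toCells (M.step^[t] c) :=
  (Function.Semiconj.iterate_right (f := toCells) (fun c => (hstep_toCells M c).symm) t c).symm

lemma step_fst_of_ne (M : TuringMachine A Q) {c : Config A Q} {j : ℤ} (hj : j ≠ c.2.2) :
    (M.step c).1 j = c.1 j :=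
  Function.update_of_ne hj _ _

lemma abs_pos_succ_sub_pos_le (M : TuringMachine A Q) (c : Config A Q) (t : ℕ) :
    |M.pos (t + 1) c - M.pos t c| ≤ 1 := by
  simp only [pos, Function.iterate_succ_apply', step, add_sub_cancel_left, abs_dir, le_refl]

lemma pos_step_iterate (M : TuringMachine A Q) (c : Config A Q) (s u : ℕ) :
    M.pos u (M.step^[s] c) = M.pos (u + s) c := by
  rw [pos, pos, Function.iterate_add_apply]

def AgreeOn (R : Set ℤ) (c c' : Config A Q) : Prop :=
  c.2 = c'.2 ∧ ∀ j ∈ R, c.1 j = c'.1 j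

lemma AgreeOn.step (M : TuringMachine A Q) {R : Set ℤ} {c c' : Config A Q}
    (h : AgreeOn R c c') (hR : c.2.2 ∈ R) : AgreeOn R (M.step c) (M.step c') := by
  obtain ⟨tape, q, i⟩ := c
  obtain ⟨tape', q', i'⟩ := c'
  obtain ⟨hhead, htape⟩ := h
  obtain ⟨rfl, rfl⟩ := Prod.mk.inj hhead
  have hread : tape i = tape' i := htape i hR
  refine ⟨by simp only [TuringMachine.step, hread], fun j hj => ?_⟩
  simp only [TuringMachine.step, Function.update_apply, hread]
  split_ifs
  · rfl
  · exact htape j hj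

lemma AgreeOn.step_iterate (M : TuringMachine A Q) {R : Set ℤ} {c c' : Config A Q}
    (h : AgreeOn R c c') {t : ℕ} (hR : ∀ u < t, M.pos u c ∈ R) :
    AgreeOn R (M.step^[t] c) (M.step^[t] c') := by
  induction t with
  | zero => exact h
  | succ t ih =>
    rw [Function.iterate_succ_apply', Function.iterate_succ_apply']
    exact (ih fun u hu => hR u (by omega)).step M (hR t (by omega))

lemma AgreeOn.toCells_eq {R : Set ℤ} {c c' : Config A Q} (h : AgreeOn R c c') {j : ℤ}
    (hj : j ∈ R) : toCells c j = toCells c' j := by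
  simp only [toCells, h.1, h.2 j hj]

lemma step_iterate_fst_of_pos_ne (M : TuringMachine A Q) (c : Config A Q) {j : ℤ} {s t : ℕ}
    (hst : s ≤ t) (hj : ∀ u, s ≤ u → u < t → M.pos u c ≠ j) :
    (M.step^[t] c).1 j = (M.step^[s] c).1 j := by
  induction t, hst using Nat.le_induction with
  | base => rfl
  | succ t hst ih =>
    rw [Function.iterate_succ_apply', step_fst_of_ne M (hj t hst (by omega)).symm]
    exact ih fun u hsu hut => hj u hsu (by omega)

lemma toCells_step_iterate_of_pos_ne (M : TuringMachine A Q) (c : Config A Q) {j : ℤ}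
    {s t : ℕ} (hst : s ≤ t) (hj : ∀ u, s ≤ u → u ≤ t → M.pos u c ≠ j) :
    toCells (M.step^[t] c) j = Sum.inl ((M.step^[s] c).1 j) := by
  rw [toCells_apply_of_ne (hj t hst le_rfl).symm,
    step_iterate_fst_of_pos_ne M c hst fun u hsu hut => hj u hsu hut.le]

lemma exists_eq_of_abs_succ_sub_le_one {g : ℕ → ℤ} (hg : ∀ n, |g (n + 1) - g n| ≤ 1)
    {a b : ℕ} (hab : a ≤ b) {v : ℤ} (hv : v ∈ Set.uIcc (g a) (g b)) :
    ∃ s, a ≤ s ∧ s ≤ b ∧ g s = v := by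
  induction b, hab using Nat.le_induction with
  | base =>
    rw [Set.uIcc_self, Set.mem_singleton_iff] at hv
    exact ⟨a, le_rfl, le_rfl, hv.symm⟩
  | succ b hab ih =>
    by_cases hvb : v ∈ Set.uIcc (g a) (g b)
    · obtain ⟨s, has, hsb, hs⟩ := ih hvb
      exact ⟨s, has, hsb.trans b.le_succ, hs⟩
    · refine ⟨b + 1, by omega, le_rfl, ?_⟩
      have := abs_le.mp (hg b)
      simp only [Set.mem_uIcc] at hv hvb
      omega

variable {M : TuringMachine A Q} {N : ℕ}

/-- A cell `b` crossed by the head on its way to `pos s` and again on its way back is a cycle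
of width `|pos s - b|` at `b`. -/
lemma NoCycleWiderThan.abs_pos_sub_le (hcyc : M.NoCycleWiderThan N) (c : Config A Q) {b : ℤ}
    {s t : ℕ} (hst : s ≤ t) (hout : b ∈ Set.uIcc (M.pos 0 c) (M.pos s c))
    (hback : b ∈ Set.uIcc (M.pos s c) (M.pos t c)) : |M.pos s c - b| ≤ N := by
  by_contra! hwide
  rw [Int.abs_eq_natAbs] at hwide
  have hne : M.pos s c ≠ b := by omega
  obtain ⟨s₁, -, hs₁s, hs₁⟩ :=
    exists_eq_of_abs_succ_sub_le_one (g := (M.pos · c)) (abs_pos_succ_sub_pos_le M c)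
      (Nat.zero_le s) hout
  obtain ⟨s₂, hss₂, -, hs₂⟩ :=
    exists_eq_of_abs_succ_sub_le_one (g := (M.pos · c)) (abs_pos_succ_sub_pos_le M c) hst
      hback
  have hs₁s : s₁ < s := lt_of_le_of_ne hs₁s (by rintro rfl; exact hne hs₁)
  have hss₂ : s < s₂ := lt_of_le_of_ne hss₂ (by rintro rfl; exact hne hs₂)
  refine hcyc (M.step^[s₁] c) b (M.pos s c - b).natAbs (s - s₁) (s₂ - s₁) ?_ (by omega)
    (by omega) hs₁ ?_ ?_
  · omega
  · rw [pos_step_iterate, Nat.sub_add_cancel hs₁s.le]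
    omega
  · rw [pos_step_iterate, Nat.sub_add_cancel (hs₁s.trans hss₂).le, hs₂]

lemma NoCycleWiderThan.abs_pos_le_of_return (hcyc : M.NoCycleWiderThan N) (c : Config A Q)
    {k : ℤ} {s t : ℕ} (hst : s ≤ t) (h0 : |M.pos 0 c| ≤ k) (ht : |M.pos t c| ≤ k) :
    |M.pos s c| ≤ k + N := by
  by_contra! hfar
  rw [abs_le] at h0 ht
  rcases lt_abs.mp hfar with hs | hs
  · have := hcyc.abs_pos_sub_le c (b := max (M.pos 0 c) (M.pos t c)) hst
      (by simp only [Set.mem_uIcc]; omega) (by simp only [Set.mem_uIcc]; omega)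
    rw [abs_le] at this
    omega
  · have := hcyc.abs_pos_sub_le c (b := min (M.pos 0 c) (M.pos t c)) hst
      (by simp only [Set.mem_uIcc]; omega) (by simp only [Set.mem_uIcc]; omega)
    rw [abs_le] at this
    omega

lemma NoCycleWiderThan.toCells_step_iterate_eq (hcyc : M.NoCycleWiderThan N) {k : ℤ}
    {c c' : Config A Q} (hhead : c.2 = c'.2) (hk : |c.2.2| ≤ k)
    (htape : ∀ j, |j| ≤ k + N → c.1 j = c'.1 j) (t : ℕ) {j : ℤ} (hj : |j| ≤ k) :
    toCells (M.step^[t] c) j = toCells (M.step^[t] c') j := by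
  classical
  set R : Set ℤ := {j | |j| ≤ k + N}
  have hagree : AgreeOn R c c' := ⟨hhead, htape⟩
  have hjR : j ∈ R := show |j| ≤ k + N by omega
  by_cases hstay : ∀ u < t, M.pos u c ∈ R
  · exact (hagree.step_iterate M hstay).toCells_eq hjR
  push Not at hstay
  obtain ⟨u, hut, hu⟩ := hstay
  have hexit : ∃ u, M.pos u c ∉ R := ⟨u, hu⟩
  set s := Nat.find hexit
  have hst : s ≤ t := (Nat.find_min' hexit hu).trans hut.le
  have hagree_s : AgreeOn R (M.step^[s] c) (M.step^[s] c') :=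
    hagree.step_iterate M fun u hu => not_not.mp (Nat.find_min hexit hu)
  -- Once the head has left `R`, it never comes back to `j`, so cell `j` is frozen.
  have hgone : ∀ d : Config A Q, |d.2.2| ≤ k → k + N < |M.pos s d| →
      ∀ u, s ≤ u → u ≤ t → M.pos u d ≠ j := by
    rintro d hd hfar u hsu - rfl
    exact hfar.not_ge (hcyc.abs_pos_le_of_return d hsu hd hj)
  have hfar : k + N < |M.pos s c| := not_le.mp (Nat.find_spec hexit)
  have hfar' : k + N < |M.pos s c'| := by rwa [pos, ← hagree_s.1]
  rw [toCells_step_iterate_of_pos_ne M c hst (hgone c hk hfar),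
    toCells_step_iterate_of_pos_ne M c' hst (hgone c' (hhead ▸ hk) hfar'), hagree_s.2 j hjR]

lemma NoCycleWiderThan.hstep_iterate_eq (hcyc : M.NoCycleWiderThan N) {k : ℤ}
    {x y : ℤ → Cell A Q} (hx : XHmem x) (hy : XHmem y)
    (hhead : ∃ i, |i| ≤ k ∧ isHead (x i))
    (hagree : ∀ i, |i| ≤ k + N → y i = x i) (t : ℕ) {j : ℤ} (hj : |j| ≤ k) :
    (M.hstep^[t] y) j = (M.hstep^[t] x) j := by
  obtain ⟨i, hik, p, hxi⟩ := hhead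
  have hyi : y i = Sum.inr p := by rw [hagree i (by omega), hxi]
  rw [eq_toCells_of_head hx hxi, eq_toCells_of_head hy hyi, hstep_iterate_toCells,
    hstep_iterate_toCells]
  exact hcyc.toCells_step_iterate_eq (c := (tapeOf y, p.2, i)) (c' := (tapeOf x, p.2, i)) rfl
    hik (fun j hj => by simp only [tapeOf, hagree j hj]) t hj

end TuringMachine

theorem bounded_cycles_implies_equicontinuity_of_head_configs_general
    {A Q : Type*}
    (M : TuringMachine A Q) (N : ℕ)
    (hcyc : ∀ (x : TuringMachine.Config A Q) (i : ℤ) (W : ℕ) (t₁ t₂ : ℕ),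
      N < W → 0 < t₁ → t₁ < t₂ → x.2.2 = i →
      (M.pos t₁ x = i + W ∨ M.pos t₁ x = i - W) → M.pos t₂ x ≠ i) :
    (∀ x : ℤ → TuringMachine.Cell A Q, TuringMachine.XHmem x →
      (∃ i : ℤ, TuringMachine.isHead (x i)) →
      ∀ k : ℕ, ∃ m : ℕ, ∀ y : ℤ → TuringMachine.Cell A Q,
        TuringMachine.XHmem y → (∀ i : ℤ, |i| ≤ (m : ℤ) → y i = x i) →
        ∀ t : ℕ, ∀ j : ℤ, |j| ≤ (k : ℤ) →
          ((M.hstep)^[t] y) j = ((M.hstep)^[t] x) j) ∧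
    (∀ (k : ℕ) (x : ℤ → TuringMachine.Cell A Q), TuringMachine.XHmem x →
      (∃ i : ℤ, |i| ≤ (k : ℤ) ∧ TuringMachine.isHead (x i)) →
      ∀ y : ℤ → TuringMachine.Cell A Q, TuringMachine.XHmem y →
        (∀ i : ℤ, |i| ≤ (k : ℤ) + N → y i = x i) →
        ∀ t : ℕ, ∀ j : ℤ, |j| ≤ (k : ℤ) →
          ((M.hstep)^[t] y) j = ((M.hstep)^[t] x) j) := by
  have hcyc : M.NoCycleWiderThan N := hcyc
  refine ⟨fun x hx ⟨i, hi⟩ k => ?_,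
    fun k x hx hhead y hy hagree t j hj => hcyc.hstep_iterate_eq hx hy hhead hagree t hj⟩
  -- Enlarge the window `[-k, k]` until it contains the head.
  set K := max k i.natAbs
  refine ⟨K + N, fun y hy hagree t j hj => hcyc.hstep_iterate_eq (k := K) hx hy ⟨i, ?_, hi⟩
    (fun i' hi' => hagree i' (by rwa [Nat.cast_add])) t
    (hj.trans (by exact_mod_cast le_max_left _ _))⟩
  rw [Int.abs_eq_natAbs]
  exact_mod_cast le_max_right _ _

/-- If the machine makes no cycle of width greater than N (the head never
returns to a cell i after having visited i+W or i−W for some W > N, starting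
with the head on i), then every configuration of X_H containing the head is an
equicontinuity point of T_H; quantitatively, if the head of x lies in [-k,k],
any y agreeing with x on [-k-N, k+N] has the same trace on [-k,k] forever. -/
theorem bounded_cycles_implies_equicontinuity_of_head_configs
    {A Q : Type*} [Fintype A] [Fintype Q]
    (M : TuringMachine A Q) (N : ℕ)
    (hcyc : ∀ (x : TuringMachine.Config A Q) (i : ℤ) (W : ℕ) (t₁ t₂ : ℕ),
      N < W → 0 < t₁ → t₁ < t₂ → x.2.2 = i →
      (M.pos t₁ x = i + W ∨ M.pos t₁ x = i - W) → M.pos t₂ x ≠ i) :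
    (∀ x : ℤ → TuringMachine.Cell A Q, TuringMachine.XHmem x →
      (∃ i : ℤ, TuringMachine.isHead (x i)) →
      ∀ k : ℕ, ∃ m : ℕ, ∀ y : ℤ → TuringMachine.Cell A Q,
        TuringMachine.XHmem y → (∀ i : ℤ, |i| ≤ (m : ℤ) → y i = x i) →
        ∀ t : ℕ, ∀ j : ℤ, |j| ≤ (k : ℤ) →
          ((M.hstep)^[t] y) j = ((M.hstep)^[t] x) j) ∧
    (∀ (k : ℕ) (x : ℤ → TuringMachine.Cell A Q), TuringMachine.XHmem x →
      (∃ i : ℤ, |i| ≤ (k : ℤ) ∧ TuringMachine.isHead (x i)) →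
      ∀ y : ℤ → TuringMachine.Cell A Q, TuringMachine.XHmem y →
        (∀ i : ℤ, |i| ≤ (k : ℤ) + N → y i = x i) →
        ∀ t : ℕ, ∀ j : ℤ, |j| ≤ (k : ℤ) →
          ((M.hstep)^[t] y) j = ((M.hstep)^[t] x) j) :=
  bounded_cycles_implies_equicontinuity_of_head_configs_general M N hcyc
end
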